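/- Let $\rho:(0,\infty)\to(0,\infty)$ be continuous and nondecreasing with $\rho(y)/y\to0$ as $y\downarrow0$, satisfying the Osgood condition, and let $\phi=\Theta^{-1}:(-\infty,M)\to(0,\infty)$ be the inverse of $\Theta(y)=\int_{y_*}^y dr/\rho(r)$. Then $\phi'(z)=\rho(\phi(z))$, $\phi(z)\to0$ as $z\to-\infty$, and for every fixed $C_0>0$, $\phi(z+C_0)/\phi(z)\to1$ as $z\to-\infty$. -/

import Mathlib

open MeasureTheory Set Filter intervalIntegral

/-!
Since `Θ' = 1/ρ > 0`, the inverse `φ` is strictly increasing and continuous, hence differentiable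
with `φ' = ρ ∘ φ`, and `φ(z) ↓ 0` as `z → -∞` because `z < Θ(y)` forces `φ(z) < y`.
Then `(log φ)' = ρ(φ)/φ → 0` as `z → -∞`, so by the mean value theorem
`log φ(z + C₀) - log φ(z) → 0`.
-/

theorem hasDerivAt_integral_of_continuousOn_Ioi {E : Type*} [NormedAddCommGroup E]
    [NormedSpace ℝ E] [CompleteSpace E] {g : ℝ → E} {c a y : ℝ}
    (hg : ContinuousOn g (Ioi c)) (ha : c < a) (hy : c < y) :
    HasDerivAt (fun u => ∫ r in a..u, g r) (g y) y :=
  integral_hasDerivAt_right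
    ((hg.mono fun _ hr => lt_of_lt_of_le (lt_min ha hy) hr.1).intervalIntegrable)
    (hg.stronglyMeasurableAtFilter isOpen_Ioi y hy) (hg.continuousAt (Ioi_mem_nhds hy))

theorem strictMonoOn_of_leftInvOn {Θ φ : ℝ → ℝ} {S T : Set ℝ} (hΘ : StrictMonoOn Θ T)
    (hφ : MapsTo φ S T) (hinv : LeftInvOn Θ φ S) : StrictMonoOn φ S :=
  fun _ ha _ hb hab => (hΘ.lt_iff_lt (hφ ha) (hφ hb)).1 (by rwa [hinv ha, hinv hb])

theorem hasDerivAt_of_leftInvOn_of_strictMonoOn {Θ φ : ℝ → ℝ} {S T : Set ℝ} {z θ' : ℝ}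
    (hΘ : StrictMonoOn Θ T) (hT : IsOpen T) (hS : IsOpen S) (hφ : MapsTo φ S T)
    (hsurj : SurjOn φ S T) (hinv : LeftInvOn Θ φ S) (hz : z ∈ S)
    (hΘ' : HasDerivAt Θ θ' (φ z)) (hθ' : θ' ≠ 0) : HasDerivAt φ θ'⁻¹ z := by
  have hcont : ContinuousAt φ z :=
    continuousAt_of_monotoneOn_of_image_mem_nhds
      (strictMonoOn_of_leftInvOn hΘ hφ hinv).monotoneOn (hS.mem_nhds hz)
      (mem_of_superset (hT.mem_nhds (hφ hz)) hsurj)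
  exact hΘ'.of_local_left_inverse hcont hθ' (eventually_of_mem (hS.mem_nhds hz) hinv)

theorem tendsto_nhdsWithin_Ioi_atBot_of_leftInvOn {Θ φ : ℝ → ℝ} {S : Set ℝ} {c : ℝ}
    (hΘ : StrictMonoOn Θ (Ioi c)) (hφ : MapsTo φ S (Ioi c)) (hinv : LeftInvOn Θ φ S)
    (hS : ∀ y > c, Iic (Θ y) ⊆ S) : Tendsto φ atBot (nhdsWithin c (Ioi c)) := by
  have hφ_gt : ∀ᶠ z in atBot, φ z ∈ Ioi c :=
    eventually_atBot.2 ⟨Θ (c + 1), fun z hz => hφ (hS (c + 1) (lt_add_one c) hz)⟩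
  refine tendsto_nhdsWithin_iff.2 ⟨tendsto_order.2 ⟨fun a ha => ?_, fun a ha => ?_⟩, hφ_gt⟩
  · exact hφ_gt.mono fun z hz => ha.trans hz
  · filter_upwards [eventually_lt_atBot (Θ a)] with z hz
    have hzS : z ∈ S := hS a ha hz.le
    exact (hΘ.lt_iff_lt (hφ hzS) ha).1 (by rwa [hinv hzS])

theorem tendsto_sub_comp_add_atBot_of_hasDerivAt {E : Type*} [NormedAddCommGroup E]
    [NormedSpace ℝ E] {f f' : ℝ → E} (hf : ∀ᶠ z in atBot, HasDerivAt f (f' z) z)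
    (hf' : Tendsto f' atBot (nhds 0)) (c : ℝ) :
    Tendsto (fun z => f (z + c) - f z) atBot (nhds 0) := by
  rw [Metric.tendsto_nhds]
  intro ε hε
  have hδ : 0 < ε / (|c| + 1) := by positivity
  obtain ⟨Z, hZ⟩ :=
    eventually_atBot.1 (hf.and (hf'.eventually (Metric.closedBall_mem_nhds 0 hδ)))
  filter_upwards [eventually_le_atBot (min Z (Z - c))] with z hz
  have hmvt := (convex_Iic Z).norm_image_sub_le_of_norm_hasDerivWithin_le
    (fun x hx => (hZ x hx).1.hasDerivWithinAt) (fun x hx => by simpa using (hZ x hx).2)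
    (show z ∈ Iic Z from hz.trans (min_le_left _ _))
    (show z + c ∈ Iic Z by have := min_le_right Z (Z - c); simp only [mem_Iic]; linarith)
  rw [dist_zero_right]
  calc ‖f (z + c) - f z‖ ≤ ε / (|c| + 1) * ‖z + c - z‖ := hmvt
    _ = ε * (|c| / (|c| + 1)) := by rw [add_sub_cancel_left, Real.norm_eq_abs]; ring
    _ < ε := mul_lt_of_lt_one_right hε ((div_lt_one (by positivity)).2 (lt_add_one _))

theorem tendsto_div_of_tendsto_log_sub {α : Type*} {l : Filter α} {u v : α → ℝ}
    (hu : ∀ᶠ x in l, 0 < u x) (hv : ∀ᶠ x in l, 0 < v x)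
    (h : Tendsto (fun x => Real.log (u x) - Real.log (v x)) l (nhds 0)) :
    Tendsto (fun x => u x / v x) l (nhds 1) := by
  have hexp := (Real.continuous_exp.tendsto 0).comp h
  rw [Real.exp_zero] at hexp
  refine hexp.congr' ?_
  filter_upwards [hu, hv] with x hux hvx
  simp only [Function.comp_apply, Real.exp_sub, Real.exp_log hux, Real.exp_log hvx]

theorem inverse_bihari_shift_invariance_general
    (ρ Θ φ : ℝ → ℝ) (ystar C0 : ℝ) (S : Set ℝ)
    (hy : 0 < ystar)
    (hρ_cont : ContinuousOn ρ (Ioi 0)) (hρ_pos : ∀ r > 0, 0 < ρ r)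
    (hρ_sub : Tendsto (fun y => ρ y / y) (nhdsWithin 0 (Ioi 0)) (nhds 0))
    (hΘ : ∀ y > 0, Θ y = ∫ r in ystar..y, 1 / ρ r)
    (hS : S = Θ '' (Ioi 0)) (hS_open : IsOpen S)
    (hS_down : ∀ z ∈ S, ∀ z' ≤ z, z' ∈ S)
    (hφ_left : ∀ y > 0, φ (Θ y) = y)
    (hφ_right : ∀ z ∈ S, 0 < φ z ∧ Θ (φ z) = z) :
    (∀ z ∈ S, HasDerivAt φ (ρ (φ z)) z) ∧
    Tendsto φ atBot (nhds 0) ∧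
    Tendsto (fun z => φ (z + C0) / φ z) atBot (nhds 1) := by
  have hΘ' : ∀ y > 0, HasDerivAt Θ (1 / ρ y) y := fun y hy' =>
    (hasDerivAt_integral_of_continuousOn_Ioi
      (continuousOn_const.div hρ_cont fun r hr => (hρ_pos r hr).ne') hy hy').congr_of_eventuallyEq
      (eventually_of_mem (Ioi_mem_nhds hy') hΘ)
  have hΘ_mono : StrictMonoOn Θ (Ioi 0) := by
    refine strictMonoOn_of_hasDerivWithinAt_pos (f' := fun y => 1 / ρ y) (convex_Ioi 0)
      (fun y hy' => (hΘ' y hy').continuousAt.continuousWithinAt) ?_ ?_ <;> rw [interior_Ioi]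
    · exact fun y hy' => (hΘ' y hy').hasDerivWithinAt
    · exact fun y hy' => one_div_pos.2 (hρ_pos y hy')
  have hΘ_mem : ∀ y > 0, Θ y ∈ S := fun y hy' => hS ▸ mem_image_of_mem Θ hy'
  have hφ_maps : MapsTo φ S (Ioi 0) := fun z hz => (hφ_right z hz).1
  have hφ_inv : LeftInvOn Θ φ S := fun z hz => (hφ_right z hz).2
  have hφ' : ∀ z ∈ S, HasDerivAt φ (ρ (φ z)) z := fun z hz => by
    simpa using hasDerivAt_of_leftInvOn_of_strictMonoOn hΘ_mono isOpen_Ioi hS_open hφ_maps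
      (fun y hy' => ⟨Θ y, hΘ_mem y hy', hφ_left y hy'⟩) hφ_inv hz (hΘ' _ (hφ_maps hz))
      (one_div_ne_zero (hρ_pos _ (hφ_maps hz)).ne')
  have hS_atBot : ∀ᶠ z in atBot, z ∈ S :=
    eventually_atBot.2 ⟨Θ ystar, hS_down _ (hΘ_mem ystar hy)⟩
  have hφ_lim : Tendsto φ atBot (nhdsWithin 0 (Ioi 0)) :=
    tendsto_nhdsWithin_Ioi_atBot_of_leftInvOn hΘ_mono hφ_maps hφ_inv
      fun y hy' z hz => hS_down _ (hΘ_mem y hy') z hz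
  have hφ_pos : ∀ᶠ z in atBot, 0 < φ z := hφ_lim self_mem_nhdsWithin
  refine ⟨hφ', hφ_lim.mono_right nhdsWithin_le_nhds, ?_⟩
  have hlog := tendsto_sub_comp_add_atBot_of_hasDerivAt
    (hS_atBot.mono fun z hz => (hφ' z hz).log (hφ_maps hz).ne') (hρ_sub.comp hφ_lim) C0
  exact tendsto_div_of_tendsto_log_sub
    ((tendsto_atBot_add_const_right atBot C0 tendsto_id).eventually hφ_pos) hφ_pos hlog

/-- **Asymptotic shift-invariance of the inverse Bihari kernel.** If `ρ` is continuous,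
positive, nondecreasing on `(0,∞)` with `ρ(y)/y → 0` as `y ↓ 0` and satisfies the Osgood
condition, and `φ = Θ⁻¹` is the inverse of `Θ(y) = ∫_{y⋆}^y dr/ρ(r)` on its range `S`,
then `φ'(z) = ρ(φ(z))`, `φ(z) → 0` as `z → -∞`, and for every fixed `C₀ > 0`,
`φ(z + C₀)/φ(z) → 1` as `z → -∞`. -/
theorem inverse_bihari_shift_invariance
    (ρ Θ φ : ℝ → ℝ) (ystar C0 : ℝ) (S : Set ℝ)
    (hy : 0 < ystar) (hC0 : 0 < C0)
    (hρ_cont : ContinuousOn ρ (Ioi 0)) (hρ_pos : ∀ r > 0, 0 < ρ r)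
    (hρ_mono : MonotoneOn ρ (Ioi 0))
    (hρ_sub : Tendsto (fun y => ρ y / y) (nhdsWithin 0 (Ioi 0)) (nhds 0))
    (hOsgood : ∀ c > 0, ¬ IntervalIntegrable (fun r => 1 / ρ r) volume 0 c)
    (hΘ : ∀ y > 0, Θ y = ∫ r in ystar..y, 1 / ρ r)
    (hS : S = Θ '' (Ioi 0)) (hS_open : IsOpen S)
    (hS_down : ∀ z ∈ S, ∀ z' ≤ z, z' ∈ S)
    (hφ_left : ∀ y > 0, φ (Θ y) = y)
    (hφ_right : ∀ z ∈ S, 0 < φ z ∧ Θ (φ z) = z) :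
    (∀ z ∈ S, HasDerivAt φ (ρ (φ z)) z) ∧
    Tendsto φ atBot (nhds 0) ∧
    Tendsto (fun z => φ (z + C0) / φ z) atBot (nhds 1) :=
  inverse_bihari_shift_invariance_general ρ Θ φ ystar C0 S hy hρ_cont hρ_pos hρ_sub hΘ hS hS_open
    hS_down hφ_left hφ_right
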